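/- arXiv:1010.5131 — 3 statements merged into one kernel-verified Lean document; each statement's English description precedes it below -/
import Mathlib

section
/- Let h and g be smooth with h(1) + h'(1) = 0, and let u be the vector field u_r = 0, u_θ = -(h(r)/sin θ) ∂g/∂φ, u_φ = h(r) ∂g/∂θ, with vorticity ω = curl u. Then on the unit sphere r = 1, the θ-component of curl(u × ω) equals -(2/sin²θ) h(1) h'(1) (∂g/∂φ)(θ,φ) G(θ,φ), where G(θ,φ) = ∂_θ(sin θ ∂_θ g) + (1/sin θ) ∂²_φ g. -/
open Real

/-- `θ`-component of the counter-example field: `u_θ = -(h r / sin θ) ∂g/∂φ`. -/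
noncomputable def uTheta (h : ℝ → ℝ) (g : ℝ → ℝ → ℝ) (r θ φ : ℝ) : ℝ :=
  -(h r / Real.sin θ) * deriv (g θ) φ

/-- `φ`-component of the counter-example field: `u_φ = h r ∂g/∂θ`. -/
noncomputable def uPhi (h : ℝ → ℝ) (g : ℝ → ℝ → ℝ) (r θ φ : ℝ) : ℝ :=
  h r * deriv (fun t : ℝ => g t φ) θ

/-- `G(θ,φ) = ∂_θ(sin θ ∂_θ g) + (1/sin θ) ∂²_φ g`. -/
noncomputable def Gfun (g : ℝ → ℝ → ℝ) (θ φ : ℝ) : ℝ :=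
  deriv (fun t : ℝ => Real.sin t * deriv (fun t' : ℝ => g t' φ) t) θ
    + (1 / Real.sin θ) * deriv (deriv (g θ)) φ

/-- Radial component of `ω = curl u`: `ω_r = (h r/(r sin θ)) G(θ,φ)`. -/
noncomputable def omegaR (h : ℝ → ℝ) (g : ℝ → ℝ → ℝ) (r θ φ : ℝ) : ℝ :=
  (h r / (r * Real.sin θ)) * Gfun g θ φ

/-- `θ`-component of `ω = curl u`: `ω_θ = -(1/r) (r h r)' ∂g/∂θ`. -/
noncomputable def omegaTheta (h : ℝ → ℝ) (g : ℝ → ℝ → ℝ) (r θ φ : ℝ) : ℝ :=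
  -(1 / r) * deriv (fun s : ℝ => s * h s) r * deriv (fun t : ℝ => g t φ) θ

/-- `φ`-component of `ω = curl u`: `ω_φ = -(1/(r sin θ)) (r h r)' ∂g/∂φ`. -/
noncomputable def omegaPhi (h : ℝ → ℝ) (g : ℝ → ℝ → ℝ) (r θ φ : ℝ) : ℝ :=
  -(1 / (r * Real.sin θ)) * deriv (fun s : ℝ => s * h s) r * deriv (g θ) φ

/-- Radial component of `v = u × ω` (with `u_r = 0`): `v_r = u_θ ω_φ - u_φ ω_θ`. -/
noncomputable def vR (h : ℝ → ℝ) (g : ℝ → ℝ → ℝ) (r θ φ : ℝ) : ℝ :=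
  uTheta h g r θ φ * omegaPhi h g r θ φ - uPhi h g r θ φ * omegaTheta h g r θ φ

/-- `θ`-component of `v = u × ω` (with `u_r = 0`): `v_θ = u_φ ω_r - u_r ω_φ`. -/
noncomputable def vTheta (h : ℝ → ℝ) (g : ℝ → ℝ → ℝ) (r θ φ : ℝ) : ℝ :=
  uPhi h g r θ φ * omegaR h g r θ φ - 0 * omegaPhi h g r θ φ

/-- `φ`-component of `v = u × ω` (with `u_r = 0`): `v_φ = u_r ω_θ - u_θ ω_r`. -/
noncomputable def vPhi (h : ℝ → ℝ) (g : ℝ → ℝ → ℝ) (r θ φ : ℝ) : ℝ :=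
  0 * omegaTheta h g r θ φ - uTheta h g r θ φ * omegaR h g r θ φ

/-- On the unit sphere `r = 1`, with `h 1 + h' 1 = 0`, the `θ`-component
`(1/r)((1/sin θ) ∂_φ v_r - ∂_r(r v_φ))` of `curl (u × ω)` equals
`-(2/sin² θ) h(1) h'(1) ∂g/∂φ · G(θ,φ)`. -/
theorem curl_v_theta_on_sphere
    (h : ℝ → ℝ) (g : ℝ → ℝ → ℝ)
    (hh : ContDiff ℝ (⊤ : ℕ∞) h) (hg : ContDiff ℝ (⊤ : ℕ∞) (Function.uncurry g))
    (hper : ∀ θ φ, g θ (φ + 2 * Real.pi) = g θ φ)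
    (hcond : h 1 + deriv h 1 = 0)
    (θ φ : ℝ) (hθ : Real.sin θ ≠ 0) :
    (1 / (1 : ℝ)) * ((1 / Real.sin θ) * deriv (fun p : ℝ => vR h g 1 θ p) φ
        - deriv (fun s : ℝ => s * vPhi h g s θ φ) 1)
      = -(2 / (Real.sin θ) ^ 2) * (h 1 * deriv h 1) * deriv (g θ) φ * Gfun g θ φ := by
  have hhd : Differentiable ℝ h := hh.differentiable (by simp)
  have hD0 : deriv (fun s : ℝ => s * h s) 1 = 0 := by
    have hd := (hasDerivAt_id (1:ℝ)).mul (hhd 1).hasDerivAt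
    have : deriv (fun s : ℝ => s * h s) 1 = _ := hd.deriv
    simp only [id_eq, one_mul] at this
    rw [this]
    linarith [hcond]
  have h1 : deriv (fun p : ℝ => vR h g 1 θ p) φ = 0 := by
    have hvR : (fun p : ℝ => vR h g 1 θ p) = fun _ => 0 := by
      funext p
      simp [vR, uTheta, uPhi, omegaTheta, omegaPhi, hD0]
    rw [hvR]; simp
  set C : ℝ := deriv (g θ) φ * Gfun g θ φ / Real.sin θ ^ 2 with hC
  have hEq : (fun s : ℝ => s * vPhi h g s θ φ) =ᶠ[nhds 1] fun s => h s * h s * C := by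
    filter_upwards [eventually_ne_nhds one_ne_zero] with s hs
    simp only [vPhi, uTheta, omegaR, omegaTheta, hC]
    field_simp
    ring
  have h2 : deriv (fun s : ℝ => s * vPhi h g s θ φ) 1 = 2 * (h 1 * deriv h 1) * C := by
    rw [hEq.deriv_eq]
    have hd := ((hhd 1).hasDerivAt.mul (hhd 1).hasDerivAt).mul_const C
    rw [show deriv (fun s : ℝ => h s * h s * C) 1 = _ from hd.deriv]
    ring
  rw [h1, h2, hC]
  field_simp
  ring
end

section
/- Let h and g be smooth with h(1) + h'(1) = 0 and h(1) ≠ 0. Suppose at a point P = (1, θ₀, φ₀) on the unit sphere (sin θ₀ ≠ 0) one has ∂g/∂φ(θ₀,φ₀) ≠ 0 and G(θ₀,φ₀) ≠ 0, where G(θ,φ) = ∂_θ(sin θ ∂_θ g) + (1/sin θ) ∂²_φ g. Then for the vector field u with u_r = 0, u_θ = -(h(r)/sin θ) ∂g/∂φ, u_φ = h(r) ∂g/∂θ, and ω = curl u, the θ-component of curl(u × ω) is nonzero at P, and hence curl(u × ω) × e_r ≠ 0 at P. -/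
open Real

/-- If `h 1 + h' 1 = 0`, `h 1 ≠ 0`, and at a point `P = (1, θ₀, φ₀)` of the unit sphere
(`sin θ₀ ≠ 0`) one has `∂g/∂φ ≠ 0` and `G ≠ 0`, then the `θ`-component of
`curl (u × ω)` is nonzero at `P`; hence `curl (u × ω) × e_r ≠ 0` at `P`
(the two tangential components of `curl (u × ω)` are not both zero). -/
theorem curl_v_nonzero_at_point
    (h : ℝ → ℝ) (g : ℝ → ℝ → ℝ)
    (hh : ContDiff ℝ (⊤ : ℕ∞) h) (hg : ContDiff ℝ (⊤ : ℕ∞) (Function.uncurry g))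
    (hper : ∀ θ φ, g θ (φ + 2 * Real.pi) = g θ φ)
    (hcond : h 1 + deriv h 1 = 0) (hne : h 1 ≠ 0)
    (θ₀ φ₀ : ℝ) (hθ : Real.sin θ₀ ≠ 0)
    (hgφ : deriv (g θ₀) φ₀ ≠ 0) (hG : Gfun g θ₀ φ₀ ≠ 0) :
    (1 / (1 : ℝ)) * ((1 / Real.sin θ₀) * deriv (fun p : ℝ => vR h g 1 θ₀ p) φ₀
        - deriv (fun s : ℝ => s * vPhi h g s θ₀ φ₀) 1) ≠ 0
    ∧ ¬((1 / (1 : ℝ)) * ((1 / Real.sin θ₀) * deriv (fun p : ℝ => vR h g 1 θ₀ p) φ₀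
          - deriv (fun s : ℝ => s * vPhi h g s θ₀ φ₀) 1) = 0
        ∧ (1 / (1 : ℝ)) * (deriv (fun s : ℝ => s * vTheta h g s θ₀ φ₀) 1
          - deriv (fun t : ℝ => vR h g 1 t φ₀) θ₀) = 0) := by
  have hdh : Differentiable ℝ h := hh.differentiable (by simp)
  have hD1 : deriv (fun s : ℝ => s * h s) 1 = 0 := by
    rw [deriv_fun_mul differentiableAt_fun_id (hdh 1)]
    simp only [deriv_id'', one_mul]
    linarith
  -- First: the φ-derivative of vR at r = 1 vanishes since vR(1,θ,·) ≡ 0.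
  have hvR : (fun p : ℝ => vR h g 1 θ₀ p) = fun _ => (0 : ℝ) := by
    funext p
    simp [vR, uTheta, uPhi, omegaTheta, omegaPhi, hD1]
  have hA0 : deriv (fun p : ℝ => vR h g 1 θ₀ p) φ₀ = 0 := by
    rw [hvR]; simp
  -- Second: compute deriv (s ↦ s * vPhi s) at 1.
  set C : ℝ := deriv (g θ₀) φ₀ * Gfun g θ₀ φ₀ / (Real.sin θ₀) ^ 2 with hC
  have heq : (fun s : ℝ => s * vPhi h g s θ₀ φ₀) =ᶠ[nhds 1] fun s => h s * h s * C := by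
    filter_upwards [eventually_ne_nhds one_ne_zero] with s hs
    simp only [vPhi, uTheta, omegaTheta, omegaR, hC, zero_mul]
    field_simp
    ring
  have hB : deriv (fun s : ℝ => s * vPhi h g s θ₀ φ₀) 1
      = (deriv h 1 * h 1 + h 1 * deriv h 1) * C := by
    rw [heq.deriv_eq, deriv_mul_const (c := fun s => h s * h s) ((hdh 1).mul (hdh 1)), deriv_fun_mul (hdh 1) (hdh 1)]
  have hder : deriv h 1 = -h 1 := by linarith
  have hCne : C ≠ 0 := div_ne_zero (mul_ne_zero hgφ hG) (pow_ne_zero 2 hθ)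
  have hmain : (1 / (1 : ℝ)) * ((1 / Real.sin θ₀) * deriv (fun p : ℝ => vR h g 1 θ₀ p) φ₀
      - deriv (fun s : ℝ => s * vPhi h g s θ₀ φ₀) 1) ≠ 0 := by
    rw [hA0, hB, hder]
    have : (1 / (1 : ℝ)) * ((1 / Real.sin θ₀) * 0 - (-h 1 * h 1 + h 1 * -h 1) * C)
        = 2 * (h 1 * h 1) * C := by ring
    rw [this]
    exact mul_ne_zero (mul_ne_zero two_ne_zero (mul_ne_zero hne hne)) hCne
  exact ⟨hmain, fun hc => hmain hc.1⟩
end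

section
/- Let g(θ, φ) = χ(θ) sin φ where χ : ℝ → ℝ is smooth, supported in (0, π), and not identically zero. Then there exists a point (θ₀, φ₀) with θ₀ ∈ (0,π) such that ∂g/∂φ(θ₀,φ₀) ≠ 0 and G(θ₀,φ₀) ≠ 0, where G(θ,φ) = ∂_θ(sin θ ∂_θ g) + (1/sin θ) ∂²_φ g. -/
open Real

lemma chi_key (χ : ℝ → ℝ) (hχ : ContDiff ℝ (⊤ : ℕ∞) χ)
    (hsupp : tsupport χ ⊆ Set.Ioo 0 π)
    (hnz : ∃ t : ℝ, χ t ≠ 0) :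
    ∃ θ₀ ∈ Set.Ioo (0:ℝ) π, χ θ₀ ≠ 0 ∧
      deriv (fun t : ℝ => Real.sin t * deriv χ t) θ₀ - χ θ₀ / Real.sin θ₀ ≠ 0 := by
  by_contra hcon
  push_neg at hcon
  have hd : Differentiable ℝ χ := hχ.differentiable (by simp)
  have hd' : Differentiable ℝ (deriv χ) :=
    (contDiff_infty_iff_deriv.mp (hχ.of_le (le_rfl : ((⊤ : ℕ∞) : WithTop ℕ∞) ≤ ((⊤ : ℕ∞) : WithTop ℕ∞)))).2.differentiable
      (by simp)
  set u : ℝ → ℝ := fun t => Real.sin t * deriv χ t with hu_def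
  have hu : Differentiable ℝ u := Real.differentiable_sin.mul hd'
  set E : ℝ → ℝ := fun t => u t * χ t with hE_def
  have hE : Differentiable ℝ E := hu.mul hd
  have hE' : ∀ t, deriv E t = deriv u t * χ t + u t * deriv χ t := by
    intro t
    exact deriv_mul (hu t) (hd t)
  -- nonnegativity of deriv E
  have hnonneg : ∀ t, 0 ≤ deriv E t := by
    intro t
    rw [hE' t]
    by_cases hc : χ t = 0
    · rw [hc, mul_zero, zero_add]
      by_cases hts : t ∈ tsupport χ
      · have hmem := hsupp hts
        have hs : 0 ≤ Real.sin t :=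
          (Real.sin_pos_of_pos_of_lt_pi hmem.1 hmem.2).le
        have : u t * deriv χ t = Real.sin t * (deriv χ t) ^ 2 := by
          simp [hu_def]; ring
        rw [this]
        positivity
      · have hz : deriv χ t = 0 := by
          by_contra hne
          exact hts (support_deriv_subset hne)
        simp [hu_def, hz]
    · have hmem := hsupp (subset_tsupport χ hc)
      have hsin : 0 < Real.sin t := Real.sin_pos_of_pos_of_lt_pi hmem.1 hmem.2
      have heq := hcon t hmem hc
      have hA : deriv u t = χ t / Real.sin t := by
        have := sub_eq_zero.mp heq
        exact this
      rw [hA]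
      have : χ t / Real.sin t * χ t + u t * deriv χ t
          = (χ t) ^ 2 / Real.sin t + Real.sin t * (deriv χ t) ^ 2 := by
        simp [hu_def]; ring
      rw [this]
      positivity
  have hmono : Monotone E := by
    apply monotone_of_deriv_nonneg hE hnonneg
  -- χ vanishes at 0 and π
  have hχ0 : χ 0 = 0 := by
    apply image_eq_zero_of_notMem_tsupport
    intro h0
    exact lt_irrefl 0 (hsupp h0).1
  have hχπ : χ π = 0 := by
    apply image_eq_zero_of_notMem_tsupport
    intro h0
    exact lt_irrefl π (hsupp h0).2
  have hE0 : E 0 = 0 := by simp [hE_def, hχ0]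
  have hEπ : E π = 0 := by simp [hE_def, hχπ]
  have hEzero : ∀ θ ∈ Set.Icc (0:ℝ) π, E θ = 0 := by
    intro θ hθ
    have h1 : E θ ≤ 0 := hEπ ▸ hmono hθ.2
    have h2 : 0 ≤ E θ := hE0 ▸ hmono hθ.1
    linarith
  -- a point where χ ≠ 0
  obtain ⟨t₀, ht₀⟩ := hnz
  have hmem := hsupp (subset_tsupport χ ht₀)
  have hsin : 0 < Real.sin t₀ := Real.sin_pos_of_pos_of_lt_pi hmem.1 hmem.2
  -- deriv E t₀ > 0
  have hpos : 0 < deriv E t₀ := by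
    rw [hE' t₀]
    have hA : deriv u t₀ = χ t₀ / Real.sin t₀ :=
      sub_eq_zero.mp (hcon t₀ hmem ht₀)
    rw [hA]
    have : χ t₀ / Real.sin t₀ * χ t₀ + u t₀ * deriv χ t₀
        = (χ t₀) ^ 2 / Real.sin t₀ + Real.sin t₀ * (deriv χ t₀) ^ 2 := by
      simp [hu_def]; ring
    rw [this]
    have h1 : 0 < (χ t₀) ^ 2 / Real.sin t₀ := by positivity
    have h2 : 0 ≤ Real.sin t₀ * (deriv χ t₀) ^ 2 := by positivity
    linarith
  -- but E is locally zero at t₀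
  have hev : E =ᶠ[nhds t₀] (fun _ => 0) := by
    filter_upwards [Ioo_mem_nhds hmem.1 hmem.2] with x hx
    exact hEzero x ⟨hx.1.le, hx.2.le⟩
  have : deriv E t₀ = 0 := by
    rw [hev.deriv_eq]
    exact deriv_const t₀ 0
  linarith

/-- For `g(θ,φ) = χ(θ) sin φ` with `χ` smooth, supported in `(0,π)`, and not
identically zero, there is a point `(θ₀, φ₀)` with `θ₀ ∈ (0,π)` where both
`∂g/∂φ ≠ 0` and `G(θ,φ) = ∂_θ(sin θ ∂_θ g) + (1/sin θ) ∂²_φ g ≠ 0`. -/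
theorem chi_sin_counterexample
    (χ : ℝ → ℝ) (hχ : ContDiff ℝ (⊤ : ℕ∞) χ)
    (hsupp : tsupport χ ⊆ Set.Ioo 0 π)
    (hnz : ∃ t : ℝ, χ t ≠ 0) :
    ∃ θ₀ ∈ Set.Ioo (0:ℝ) π, ∃ φ₀ : ℝ,
      deriv (fun p : ℝ => χ θ₀ * Real.sin p) φ₀ ≠ 0
      ∧ deriv (fun t : ℝ => Real.sin t * deriv (fun t' : ℝ => χ t' * Real.sin φ₀) t) θ₀
          + (1 / Real.sin θ₀) *
              deriv (deriv (fun p : ℝ => χ θ₀ * Real.sin p)) φ₀ ≠ 0 := by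
  obtain ⟨θ₀, hθ₀, hχne, hkey⟩ := chi_key χ hχ hsupp hnz
  have hd : Differentiable ℝ χ := hχ.differentiable (by simp)
  have hd' : Differentiable ℝ (deriv χ) :=
    (contDiff_infty_iff_deriv.mp (hχ.of_le (le_rfl : ((⊤ : ℕ∞) : WithTop ℕ∞) ≤ ((⊤ : ℕ∞) : WithTop ℕ∞)))).2.differentiable
      (by simp)
  refine ⟨θ₀, hθ₀, π/4, ?_, ?_⟩
  · have h1 : deriv (fun p : ℝ => χ θ₀ * Real.sin p) (π/4)
        = χ θ₀ * Real.cos (π/4) := by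
      rw [deriv_const_mul _ Real.differentiable_sin.differentiableAt,
        Real.deriv_sin]
    rw [h1, Real.cos_pi_div_four]
    have : Real.sqrt 2 / 2 ≠ 0 := by positivity
    exact mul_ne_zero hχne this
  · have hsinθ : 0 < Real.sin θ₀ := Real.sin_pos_of_pos_of_lt_pi hθ₀.1 hθ₀.2
    have hsinφ : Real.sin (π/4) ≠ 0 := by
      rw [Real.sin_pi_div_four]; positivity
    -- simplify the inner derivative in θ
    have hinner : (fun t' : ℝ => deriv (fun t'' : ℝ => χ t'' * Real.sin (π/4)) t')
        = fun t' => deriv χ t' * Real.sin (π/4) := by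
      funext t'
      exact deriv_mul_const (hd t') _
    have hterm1 : deriv (fun t : ℝ =>
          Real.sin t * deriv (fun t' : ℝ => χ t' * Real.sin (π/4)) t) θ₀
        = deriv (fun t : ℝ => Real.sin t * deriv χ t) θ₀ * Real.sin (π/4) := by
      have heq : (fun t : ℝ => Real.sin t * deriv (fun t' : ℝ => χ t' * Real.sin (π/4)) t)
          = fun t : ℝ => (Real.sin t * deriv χ t) * Real.sin (π/4) := by
        funext t
        rw [show deriv (fun t' : ℝ => χ t' * Real.sin (π/4)) t
            = deriv χ t * Real.sin (π/4) from deriv_mul_const (hd t) _]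
        ring
      rw [heq, deriv_mul_const (c := fun t : ℝ => Real.sin t * deriv χ t) ((Real.differentiable_sin.mul hd') θ₀)]
    -- simplify the second φ-derivative
    have hφ1 : deriv (fun p : ℝ => χ θ₀ * Real.sin p) = fun p => χ θ₀ * Real.cos p := by
      funext p
      rw [deriv_const_mul _ Real.differentiable_sin.differentiableAt, Real.deriv_sin]
    have hterm2 : deriv (deriv (fun p : ℝ => χ θ₀ * Real.sin p)) (π/4)
        = χ θ₀ * (-Real.sin (π/4)) := by
      rw [hφ1]
      rw [deriv_const_mul _ Real.differentiable_cos.differentiableAt, Real.deriv_cos]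
    rw [hterm1, hterm2]
    have hfactor : deriv (fun t : ℝ => Real.sin t * deriv χ t) θ₀ * Real.sin (π/4)
          + 1 / Real.sin θ₀ * (χ θ₀ * -Real.sin (π/4))
        = Real.sin (π/4) *
          (deriv (fun t : ℝ => Real.sin t * deriv χ t) θ₀ - χ θ₀ / Real.sin θ₀) := by
      ring
    rw [hfactor]
    exact mul_ne_zero hsinφ hkey
end
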